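/- arXiv:2504.06652 — 7 statements merged into one kernel-verified Lean document; each statement's English description precedes it below -/
import Mathlib

section
/- Let G = (V,E) be a connected static graph on n vertices and let k be a real number with 1 < k < n. If Z ⊆ V is a set of vertices such that no two distinct vertices u, v ∈ Z are connected by a path of at most k edges in G, then |Z| < 2n/k. -/
/-!
Put `r = ⌊k/2⌋`. The closed balls of radius `r` around the points of `Z` are pairwise disjoint,
since two distinct points of `Z` are more than `k ≥ 2r` apart. In a connected graph with more
than `r` vertices every such ball contains at least `r + 1` vertices (the first `r + 1` vertices
of a shortest path from its centre to a vertex at distance `≥ r`, or else all of `V`).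
Hence `|Z| (r + 1) ≤ n`, and `r + 1 > k/2`.
-/

open Finset

namespace SimpleGraph

variable {V : Type*} {G : SimpleGraph V}

noncomputable def closedBall [Fintype V] (G : SimpleGraph V) (z : V) (r : ℕ) : Finset V :=
  {v | G.dist z v ≤ r}

@[simp]
lemma mem_closedBall [Fintype V] {z v : V} {r : ℕ} : v ∈ G.closedBall z r ↔ G.dist z v ≤ r := by
  simp [closedBall]

lemma Walk.dist_getVert_of_length_eq_dist {u v : V} (p : G.Walk u v)
    (hp : p.length = G.dist u v) {i : ℕ} (hi : i ≤ p.length) : G.dist u (p.getVert i) = i := by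
  have hleft : G.dist u (p.getVert i) ≤ i :=
    (dist_le (p.take i)).trans (by simp [take_length])
  have hright : G.dist (p.getVert i) v ≤ p.length - i :=
    (dist_le (p.drop i)).trans_eq (p.drop_length i)
  have := (p.drop i).reachable.dist_triangle_right u
  omega

lemma Connected.succ_le_card_closedBall [Fintype V] (hconn : G.Connected) (z : V) {r : ℕ}
    (hr : r < Fintype.card V) : r + 1 ≤ #(G.closedBall z r) := by
  by_cases! hfar : ∃ v, r ≤ G.dist z v
  · obtain ⟨v, hv⟩ := hfar
    obtain ⟨p, hp⟩ := hconn.exists_walk_length_eq_dist z v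
    have hdist : ∀ i ∈ range (r + 1), G.dist z (p.getVert i) = i := fun i hi =>
      p.dist_getVert_of_length_eq_dist hp (by rw [mem_range] at hi; omega)
    simpa using card_le_card_of_injOn (s := range (r + 1)) (t := G.closedBall z r) p.getVert
      (fun i hi => by
        rw [mem_coe, mem_closedBall, hdist i hi]
        exact Nat.lt_succ_iff.mp (mem_range.mp hi))
      (fun i hi j hj hij => by
        rw [← hdist i hi, ← hdist j hj]
        exact congrArg (G.dist z) hij)
  · have hball : G.closedBall z r = univ := eq_univ_of_forall fun v => by simpa using (hfar v).le
    rw [hball, card_univ]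
    omega

lemma Connected.pairwiseDisjoint_closedBall [Fintype V] (hconn : G.Connected) {Z : Finset V}
    {r : ℕ} (hZ : ∀ u ∈ Z, ∀ v ∈ Z, u ≠ v → 2 * r < G.dist u v) :
    (Z : Set V).PairwiseDisjoint (G.closedBall · r) := by
  intro u hu v hv huv
  refine Finset.disjoint_left.mpr fun w hwu hwv => ?_
  rw [mem_closedBall] at hwu hwv
  have := hZ u hu v hv huv
  have := hconn.dist_triangle (u := u) (v := w) (w := v)
  rw [dist_comm (u := w)] at this
  omega

lemma Connected.card_mul_succ_le_card [Fintype V] (hconn : G.Connected) {Z : Finset V} {r : ℕ}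
    (hr : r < Fintype.card V) (hZ : ∀ u ∈ Z, ∀ v ∈ Z, u ≠ v → 2 * r < G.dist u v) :
    #Z * (r + 1) ≤ Fintype.card V := by
  classical
  calc #Z * (r + 1) = ∑ _z ∈ Z, (r + 1) := by rw [sum_const, smul_eq_mul]
    _ ≤ ∑ z ∈ Z, #(G.closedBall z r) := sum_le_sum fun z _ => hconn.succ_le_card_closedBall z hr
    _ = #(Z.biUnion (G.closedBall · r)) := (card_biUnion (hconn.pairwiseDisjoint_closedBall hZ)).symm
    _ ≤ Fintype.card V := card_le_univ _

end SimpleGraph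

theorem stmt_0 {V : Type*} [Fintype V] (G : SimpleGraph V) (hconn : G.Connected)
    (n : ℕ) (hn : n = Fintype.card V) (k : ℝ) (hk1 : 1 < k) (hkn : k < n)
    (Z : Finset V)
    (hZ : ∀ u ∈ Z, ∀ v ∈ Z, u ≠ v → ¬((G.dist u v : ℝ) ≤ k)) :
    (Z.card : ℝ) < 2 * n / k := by
  subst hn
  set r := ⌊k / 2⌋₊
  have hr_le : (r : ℝ) ≤ k / 2 := Nat.floor_le (by linarith)
  have hr_lt : k / 2 < r + 1 := Nat.lt_floor_add_one _
  have hrn : r < Fintype.card V := by exact_mod_cast (show (r : ℝ) < Fintype.card V by linarith)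
  have hsep : ∀ u ∈ Z, ∀ v ∈ Z, u ≠ v → 2 * r < G.dist u v := fun u hu v hv huv => by
    have := hZ u hu v hv huv
    exact_mod_cast (show (2 * r : ℝ) < G.dist u v by linarith)
  have hcount : (Z.card : ℝ) * (r + 1) ≤ Fintype.card V := by
    exact_mod_cast hconn.card_mul_succ_le_card hrn hsep
  rw [lt_div_iff₀ (by linarith)]
  rcases Z.eq_empty_or_nonempty with rfl | hne
  · simp only [card_empty, Nat.cast_zero, zero_mul]
    linarith
  · have : (0 : ℝ) < Z.card := by exact_mod_cast hne.card_pos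
    nlinarith
end

section
/- Let 𝒢 = (G_1, ..., G_L) be a temporal graph on vertex set V of size n, with every snapshot G_t connected, and let k be an integer with 1 ≤ k < n and L ≥ kn. Let u, v be distinct vertices such that there exist kn distinct time steps t at which the snapshot G_t contains a path between u and v of at most k edges. Then there exists a strict journey from u to v of length at most k in 𝒢 using only edges at those time steps. -/
/-!
Let `R_s(i)` be the set of vertices reachable from `u` by a strict journey with at most `i`
edges whose time steps lie in `T` and precede `s`. As long as `v ∉ R_s(k)`, every `t ∈ T`
makes one of the sets `R_t(1), …, R_t(k)` grow: along a `u`–`v` path of length `≤ k` in `G_t`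
the `j`-th vertex cannot lie in `R_t(j)` for all `j`, and at the first failure the edge at
time `t` adds a new vertex to `R_{t+1}(j)`. So the potential `∑_{1 ≤ i ≤ k} |R_s(i)|` grows by at
least `|T| = k n`, yet it is at most `k (n - 1)` while `v` is unreachable.
-/

/-- A strict journey in a temporal graph `G` of lifetime `L`: `l` edges, vertices `w 0, ..., w l`,
traversed at strictly increasing time steps `t 0 < t 1 < ... < t (l-1)` within `[1, L]`. -/
def IsJourney {V : Type*} (G : ℕ → SimpleGraph V) (L l : ℕ) (w : ℕ → V) (t : ℕ → ℕ) : Prop :=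
  (∀ i < l, (G (t i)).Adj (w i) (w (i + 1))) ∧
  (∀ i < l, 1 ≤ t i ∧ t i ≤ L) ∧
  (∀ i j, i < j → j < l → t i < t j)

open Finset

theorem Finset.card_add_le_of_lt_apply_succ {f : ℕ → ℕ} (hf : Monotone f) {T : Finset ℕ}
    (hT : ∀ t ∈ T, f t < f (t + 1)) {s : ℕ} (hs : ∀ t ∈ T, t < s) : #T + f 0 ≤ f s := by
  induction T using Finset.induction_on_max generalizing s with
  | empty => simpa using hf (Nat.zero_le s)
  | insert a T hlt ih =>
    have hbelow : #T + f 0 ≤ f a := ih (fun t ht => hT t (mem_insert_of_mem ht)) hlt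
    have hstep : f a < f (a + 1) := hT a (mem_insert_self a T)
    have hle : f (a + 1) ≤ f s := hf (hs a (mem_insert_self a T))
    have hcard : #(insert a T) ≤ #T + 1 := card_insert_le a T
    omega

section JourneyReach

variable {V : Type*} {G : ℕ → SimpleGraph V} {L : ℕ}

theorem IsJourney.snoc {l : ℕ} {w : ℕ → V} {tm : ℕ → ℕ} (h : IsJourney G L l w tm) {t : ℕ}
    (ht : 1 ≤ t ∧ t ≤ L) (hlt : ∀ i < l, tm i < t) {y : V} (hadj : (G t).Adj (w l) y) :
    IsJourney G L (l + 1) (Function.update w (l + 1) y) (Function.update tm l t) := by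
  obtain ⟨hadjs, hrange, hmono⟩ := h
  refine ⟨fun i hi => ?_, fun i hi => ?_, fun i j hij hj => ?_⟩
  · rcases (Nat.lt_succ_iff_lt_or_eq.mp hi) with hi | rfl
    · simpa [Function.update_of_ne hi.ne, Function.update_of_ne (by omega : i ≠ l + 1),
        Function.update_of_ne (by omega : i + 1 ≠ l + 1)] using hadjs i hi
    · simpa [Function.update_of_ne (by omega : i ≠ i + 1)] using hadj
  · rcases (Nat.lt_succ_iff_lt_or_eq.mp hi) with hi | rfl
    · simpa [Function.update_of_ne hi.ne] using hrange i hi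
    · simpa using ht
  · rcases (Nat.lt_succ_iff_lt_or_eq.mp hj) with hj | rfl
    · simpa [Function.update_of_ne hj.ne, Function.update_of_ne (hij.trans hj).ne]
        using hmono i j hij hj
    · simpa [Function.update_of_ne hij.ne] using hlt i hij

variable (G L) (T : Finset ℕ) (u : V)

def journeyReach (s i : ℕ) : Set V :=
  {x | ∃ l ≤ i, ∃ (w : ℕ → V) (tm : ℕ → ℕ),
    IsJourney G L l w tm ∧ (∀ j < l, tm j ∈ T ∧ tm j < s) ∧ w 0 = u ∧ w l = x}

variable {G L T u}

theorem mem_journeyReach_zero (s : ℕ) : u ∈ journeyReach G L T u s 0 :=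
  ⟨0, le_rfl, fun _ => u, id, ⟨by simp, by simp, by omega⟩, by simp, rfl, rfl⟩

theorem journeyReach_mono {s s' i i' : ℕ} (hs : s ≤ s') (hi : i ≤ i') :
    journeyReach G L T u s i ⊆ journeyReach G L T u s' i' := by
  rintro x ⟨l, hl, w, tm, hj, htm, h0, hl'⟩
  exact ⟨l, hl.trans hi, w, tm, hj, fun j hj => ⟨(htm j hj).1, (htm j hj).2.trans_le hs⟩, h0, hl'⟩

theorem mem_journeyReach_succ_of_adj {t i : ℕ} {x y : V} (hx : x ∈ journeyReach G L T u t i)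
    (htT : t ∈ T) (ht : 1 ≤ t ∧ t ≤ L) (hadj : (G t).Adj x y) :
    y ∈ journeyReach G L T u (t + 1) (i + 1) := by
  obtain ⟨l, hl, w, tm, hj, htm, h0, rfl⟩ := hx
  refine ⟨l + 1, by omega, _, _, hj.snoc ht (fun j hj => (htm j hj).2) hadj, fun j hj => ?_,
    by simpa using h0, by simp⟩
  rcases (Nat.lt_succ_iff_lt_or_eq.mp hj) with hj | rfl
  · simpa [Function.update_of_ne hj.ne] using ⟨(htm j hj).1, (htm j hj).2.le⟩
  · simpa using htT

theorem getVert_mem_journeyReach_of_stable {t k : ℕ} (htT : t ∈ T) (ht : 1 ≤ t ∧ t ≤ L)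
    {v : V} (p : (G t).Walk u v) (hp : p.length ≤ k)
    (hstable : ∀ i < k, journeyReach G L T u (t + 1) (i + 1) ⊆ journeyReach G L T u t (i + 1))
    {j : ℕ} (hj : j ≤ p.length) : p.getVert j ∈ journeyReach G L T u t j := by
  induction j with
  | zero => simpa using mem_journeyReach_zero t
  | succ j ih =>
    exact hstable j (by omega) <| mem_journeyReach_succ_of_adj (ih (by omega)) htT ht
      (p.adj_getVert_succ (by omega))

theorem exists_journeyReach_ssubset {t k : ℕ} (htT : t ∈ T) (ht : 1 ≤ t ∧ t ≤ L) {v : V}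
    (p : (G t).Walk u v) (hp : p.length ≤ k) (hv : v ∉ journeyReach G L T u (t + 1) k) :
    ∃ i < k, journeyReach G L T u t (i + 1) ⊂ journeyReach G L T u (t + 1) (i + 1) := by
  by_contra! hno
  have hstable : ∀ i < k, journeyReach G L T u (t + 1) (i + 1) ⊆ journeyReach G L T u t (i + 1) :=
    fun i hi => not_not.mp fun hnsub =>
      hno i hi (ssubset_iff_subset_not_subset.mpr ⟨journeyReach_mono (by omega) le_rfl, hnsub⟩)
  have hvt := getVert_mem_journeyReach_of_stable htT ht p hp hstable le_rfl
  rw [p.getVert_length] at hvt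
  exact hv (journeyReach_mono (Nat.le_succ t) hp hvt)

variable (G L T u)

noncomputable def reachPotential (k s : ℕ) : ℕ :=
  ∑ i ∈ range k, (journeyReach G L T u s (i + 1)).ncard

variable {G L T u} [Finite V]

theorem reachPotential_mono (k : ℕ) : Monotone (reachPotential G L T u k) := fun _ _ hs =>
  sum_le_sum fun i _ => Set.ncard_le_ncard (journeyReach_mono hs le_rfl)

theorem reachPotential_lt_succ {t k : ℕ} (htT : t ∈ T) (ht : 1 ≤ t ∧ t ≤ L) {v : V}
    (p : (G t).Walk u v) (hp : p.length ≤ k) (hv : v ∉ journeyReach G L T u (t + 1) k) :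
    reachPotential G L T u k t < reachPotential G L T u k (t + 1) := by
  obtain ⟨i, hi, hssub⟩ := exists_journeyReach_ssubset htT ht p hp hv
  exact sum_lt_sum (fun i _ => Set.ncard_le_ncard (journeyReach_mono (Nat.le_succ t) le_rfl))
    ⟨i, mem_range.mpr hi, Set.ncard_lt_ncard hssub⟩

theorem reachPotential_le {k s : ℕ} {v : V} (hv : v ∉ journeyReach G L T u s k) :
    reachPotential G L T u k s ≤ k * (Nat.card V - 1) := by
  unfold reachPotential
  have hlevel : ∀ i ∈ range k, (journeyReach G L T u s (i + 1)).ncard ≤ Nat.card V - 1 := by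
    intro i hi
    have hsub : journeyReach G L T u s (i + 1) ⊆ {v}ᶜ := fun x hx hxv =>
      hv (journeyReach_mono le_rfl (mem_range.mp hi) (hxv ▸ hx))
    calc (journeyReach G L T u s (i + 1)).ncard ≤ ({v}ᶜ : Set V).ncard := Set.ncard_le_ncard hsub
      _ = Nat.card V - 1 := by rw [Set.ncard_compl, Set.ncard_singleton]
  simpa using sum_le_card_nsmul _ _ _ hlevel

end JourneyReach

theorem stmt_3_general {V : Type*} [Fintype V] (G : ℕ → SimpleGraph V) (L : ℕ)
    (n : ℕ) (hn : n = Fintype.card V)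
    (k : ℕ) (hk1 : 1 ≤ k)
    (u v : V)
    (T : Finset ℕ) (hTcard : T.card = k * n)
    (hT : ∀ t ∈ T, 1 ≤ t ∧ t ≤ L ∧ ∃ p : (G t).Walk u v, p.length ≤ k) :
    ∃ (l : ℕ) (w : ℕ → V) (tm : ℕ → ℕ), l ≤ k ∧ IsJourney G L l w tm ∧
      (∀ i < l, tm i ∈ T) ∧ w 0 = u ∧ w l = v := by
  by_contra hnot
  have hv : ∀ s, v ∉ journeyReach G L T u s k := fun s ⟨l, hl, w, tm, hj, htm, h0, hl'⟩ =>
    hnot ⟨l, w, tm, hl, hj, fun i hi => (htm i hi).1, h0, hl'⟩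
  have hgrow : ∀ t ∈ T, reachPotential G L T u k t < reachPotential G L T u k (t + 1) := by
    intro t htT
    obtain ⟨ht1, htL, p, hp⟩ := hT t htT
    exact reachPotential_lt_succ htT ⟨ht1, htL⟩ p hp (hv _)
  have hlower := card_add_le_of_lt_apply_succ (reachPotential_mono k) hgrow
    (s := L + 1) fun t ht => Nat.lt_succ_of_le (hT t ht).2.1
  have hupper := reachPotential_le (hv (L + 1))
  have hkn : k ≤ k * n := Nat.le_mul_of_pos_right k (hn ▸ Fintype.card_pos_iff.mpr ⟨u⟩)
  rw [hTcard] at hlower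
  rw [Nat.card_eq_fintype_card, ← hn, Nat.mul_sub_one] at hupper
  omega

theorem stmt_3 {V : Type*} [Fintype V] (G : ℕ → SimpleGraph V) (L : ℕ)
    (hconn : ∀ t, 1 ≤ t → t ≤ L → (G t).Connected)
    (n : ℕ) (hn : n = Fintype.card V)
    (k : ℕ) (hk1 : 1 ≤ k) (hkn : k < n) (hL : k * n ≤ L)
    (u v : V) (huv : u ≠ v)
    (T : Finset ℕ) (hTcard : T.card = k * n)
    (hT : ∀ t ∈ T, 1 ≤ t ∧ t ≤ L ∧ ∃ p : (G t).Walk u v, p.length ≤ k) :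
    ∃ (l : ℕ) (w : ℕ → V) (tm : ℕ → ℕ), l ≤ k ∧ IsJourney G L l w tm ∧
      (∀ i < l, tm i ∈ T) ∧ w 0 = u ∧ w l = v :=
  stmt_3_general G L n hn k hk1 u v T hTcard hT
end

section
/- Let 𝒢 be a temporal graph on n vertices with every snapshot connected and lifetime L ≥ n − 1. Then for every pair of vertices (u,v) and every starting time t with t ≤ L − n + 2, there exists a strict journey from u to v whose first edge is traversed at a time step ≥ t and whose last edge is traversed at a time step ≤ t + n − 2 (in particular the journey uses at most n − 1 edges). -/
section TemporalReachability

variable {V : Type*} {G : ℕ → SimpleGraph V} {L : ℕ}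

theorem IsJourney.length_le {l : ℕ} {w : ℕ → V} {tm : ℕ → ℕ} (hJ : IsJourney G L l w tm)
    {t k : ℕ} (hwin : ∀ i < l, t ≤ tm i ∧ tm i < t + k) : l ≤ k := by
  have hlow : ∀ i < l, t + i ≤ tm i := by
    intro i
    induction i with
    | zero => exact fun hi => (hwin 0 hi).1
    | succ i ih =>
      intro hi
      have := hJ.2.2 i (i + 1) i.lt_succ_self hi
      have := ih (by omega)
      omega
  rcases Nat.eq_zero_or_pos l with rfl | hpos
  · exact Nat.zero_le k
  · have := hlow (l - 1) (by omega)
    have := (hwin (l - 1) (by omega)).2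
    omega

variable (G L) in
def JourneyReachable (u : V) (t k : ℕ) (x : V) : Prop :=
  ∃ (l : ℕ) (w : ℕ → V) (tm : ℕ → ℕ), IsJourney G L l w tm ∧ w 0 = u ∧ w l = x ∧
    ∀ i < l, t ≤ tm i ∧ tm i < t + k

namespace JourneyReachable

variable {u x y : V} {t k : ℕ}

theorem refl (u : V) (t k : ℕ) : JourneyReachable G L u t k u :=
  ⟨0, fun _ => u, fun _ => 0, ⟨nofun, nofun, fun _ _ _ h => absurd h (Nat.not_lt_zero _)⟩,
    rfl, rfl, nofun⟩

theorem mono (h : JourneyReachable G L u t k x) {k' : ℕ} (hk : k ≤ k') :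
    JourneyReachable G L u t k' x := by
  obtain ⟨l, w, tm, hJ, h0, hl, hwin⟩ := h
  exact ⟨l, w, tm, hJ, h0, hl, fun i hi => ⟨(hwin i hi).1, by have := (hwin i hi).2; omega⟩⟩

theorem snoc (h : JourneyReachable G L u t k y) (hadj : (G (t + k)).Adj y x) (ht : 1 ≤ t)
    (htk : t + k ≤ L) : JourneyReachable G L u t (k + 1) x := by
  obtain ⟨l, w, tm, ⟨hadjs, hrange, hmono⟩, h0, hl, hwin⟩ := h
  refine ⟨l + 1, Function.update w (l + 1) x, Function.update tm l (t + k), ⟨?_, ?_, ?_⟩,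
    ?_, by simp, ?_⟩
  · intro i hi
    rcases Nat.lt_or_ge i l with hil | hil
    · simpa [Function.update, hil.ne, show i ≠ l + 1 by omega] using hadjs i hil
    · obtain rfl : i = l := by omega
      simpa [Function.update, hl] using hadj
  · intro i hi
    rcases eq_or_ne i l with rfl | hne
    · simp only [Function.update_self]; omega
    · simpa [Function.update, hne] using hrange i (by omega)
  · intro i j hij hj
    rcases eq_or_ne j l with rfl | hne
    · simpa [Function.update, hij.ne] using (hwin i hij).2
    · simpa [Function.update, hne, show i ≠ l by omega] using hmono i j hij (by omega)
  · simpa [Function.update] using h0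
  · intro i hi
    rcases eq_or_ne i l with rfl | hne
    · simp only [Function.update_self]; omega
    · have := hwin i (by omega)
      simp only [Function.update, hne, dite_false]
      omega

end JourneyReachable

variable (G L) in
def journeyReachableSet (u : V) (t k : ℕ) : Set V :=
  {x | JourneyReachable G L u t k x}

theorem journeyReachableSet_ssubset_succ {u : V} {t k : ℕ}
    (hne : journeyReachableSet G L u t k ≠ Set.univ) (hconn : (G (t + k)).Connected)
    (ht : 1 ≤ t) (htk : t + k ≤ L) :
    journeyReachableSet G L u t k ⊂ journeyReachableSet G L u t (k + 1) := by
  obtain ⟨x, hx⟩ := (Set.ne_univ_iff_exists_notMem _).mp hne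
  obtain ⟨d, -, hd, hd'⟩ := (hconn u x).some.exists_boundary_dart _
    (JourneyReachable.refl u t k) hx
  refine Set.ssubset_iff_of_subset (fun y hy => JourneyReachable.mono hy k.le_succ) |>.mpr
    ⟨d.snd, ?_, hd'⟩
  exact JourneyReachable.snoc hd d.adj ht htk

theorem min_le_ncard_journeyReachableSet [Finite V] (u : V) {t k : ℕ}
    (hconn : ∀ j < k, (G (t + j)).Connected) (ht : 1 ≤ t) (htk : t + k ≤ L + 1) :
    min (k + 1) (Nat.card V) ≤ (journeyReachableSet G L u t k).ncard := by
  induction k with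
  | zero =>
    have : 0 < (journeyReachableSet G L u t 0).ncard :=
      (Set.ncard_pos).mpr ⟨u, JourneyReachable.refl u t 0⟩
    omega
  | succ k ih =>
    have ih := ih (fun j hj => hconn j (by omega)) (by omega)
    by_cases huniv : journeyReachableSet G L u t k = Set.univ
    · have : journeyReachableSet G L u t (k + 1) = Set.univ :=
        Set.eq_univ_of_univ_subset (huniv ▸ fun y hy => JourneyReachable.mono hy k.le_succ)
      rw [this, Set.ncard_univ]
      omega
    · have hlt := Set.ncard_lt_ncard <|
        journeyReachableSet_ssubset_succ huniv (hconn k k.lt_succ_self) ht (by omega)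
      omega

theorem journeyReachable_of_connected [Finite V] (u x : V) {t : ℕ}
    (hconn : ∀ j < Nat.card V - 1, (G (t + j)).Connected) (ht : 1 ≤ t)
    (htL : t + (Nat.card V - 1) ≤ L + 1) :
    JourneyReachable G L u t (Nat.card V - 1) x := by
  have hcard := min_le_ncard_journeyReachableSet (L := L) u hconn ht htL
  have : Nonempty V := ⟨u⟩
  have hpos : 0 < Nat.card V := Nat.card_pos
  have huniv : journeyReachableSet G L u t (Nat.card V - 1) = Set.univ :=
    Set.eq_of_subset_of_ncard_le (Set.subset_univ _) (by rw [Set.ncard_univ]; omega)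
  exact (Set.eq_univ_iff_forall.mp huniv) x

end TemporalReachability

theorem stmt_4_general {V : Type*} [Fintype V] (G : ℕ → SimpleGraph V) (L : ℕ)
    (hconn : ∀ t, 1 ≤ t → t ≤ L → (G t).Connected)
    (n : ℕ) (hn : n = Fintype.card V)
    (u v : V) (t : ℕ) (ht1 : 1 ≤ t) (ht : t + n ≤ L + 2) :
    ∃ (l : ℕ) (w : ℕ → V) (tm : ℕ → ℕ), l ≤ n - 1 ∧ IsJourney G L l w tm ∧
      w 0 = u ∧ w l = v ∧ ∀ i < l, t ≤ tm i ∧ tm i ≤ t + n - 2 := by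
  rw [← Nat.card_eq_fintype_card] at hn
  subst hn
  have : Nonempty V := ⟨u⟩
  have hpos : 0 < Nat.card V := Nat.card_pos
  obtain ⟨l, w, tm, hJ, h0, hl, hwin⟩ := journeyReachable_of_connected (G := G) (L := L) u v
    (fun j hj => hconn (t + j) (by omega) (by omega)) ht1 (by omega)
  refine ⟨l, w, tm, hJ.length_le hwin, hJ, h0, hl, fun i hi => ?_⟩
  have := hwin i hi
  omega

theorem stmt_4 {V : Type*} [Fintype V] (G : ℕ → SimpleGraph V) (L : ℕ)
    (hconn : ∀ t, 1 ≤ t → t ≤ L → (G t).Connected)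
    (n : ℕ) (hn : n = Fintype.card V) (hL : n - 1 ≤ L)
    (u v : V) (t : ℕ) (ht1 : 1 ≤ t) (ht : t + n ≤ L + 2) :
    ∃ (l : ℕ) (w : ℕ → V) (tm : ℕ → ℕ), l ≤ n - 1 ∧ IsJourney G L l w tm ∧
      w 0 = u ∧ w l = v ∧ ∀ i < l, t ≤ tm i ∧ tm i ≤ t + n - 2 :=
  stmt_4_general G L hconn n hn u v t ht1 ht
end

section
/- Let 𝒢 be a temporal graph on n vertices with lifetime L ≥ k n^2, where 0 < k < n is an integer, and suppose that every snapshot G_t (t ≤ L) is connected and has diameter at most k. Then for any starting vertex there exists a strict journey starting there that visits all n vertices and traverses at most k(n−1) < kn edges, taking at most kn(n−1) time steps. -/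
namespace TemporalGraph

def seqAppend {α : Type*} (l : ℕ) (f g : ℕ → α) (i : ℕ) : α :=
  if i < l then f i else g (i - l)

section seqAppend

variable {α : Type*} {l i : ℕ} {f g : ℕ → α}

lemma seqAppend_of_lt (hi : i < l) : seqAppend l f g i = f i := if_pos hi

lemma seqAppend_add (i : ℕ) : seqAppend l f g (l + i) = g i := by
  simp [seqAppend]

lemma seqAppend_of_le (hfg : f l = g 0) (hi : i ≤ l) : seqAppend l f g i = f i := by
  rcases hi.lt_or_eq with hi | rfl
  · exact seqAppend_of_lt hi
  · simpa [seqAppend] using hfg.symm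

end seqAppend

variable {V : Type*} (G : ℕ → SimpleGraph V)

structure IsJourneyOn (a b l : ℕ) (w : ℕ → V) (t : ℕ → ℕ) : Prop where
  adj : ∀ i < l, (G (t i)).Adj (w i) (w (i + 1))
  time_mem : ∀ i < l, t i ∈ Set.Ioc a b
  time_lt : ∀ i j, i < j → j < l → t i < t j

def Reaches (a b j : ℕ) (u x : V) : Prop :=
  ∃ l w t, l ≤ j ∧ w 0 = u ∧ w l = x ∧ IsJourneyOn G a b l w t

noncomputable def reachPotential (a b k : ℕ) (u : V) : ℕ :=
  ∑ j ∈ Finset.Icc 1 k, {x | Reaches G a b j u x}.ncard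

variable {G} {a b c j j' k l l₁ l₂ : ℕ} {u v x y : V} {w w₁ w₂ : ℕ → V} {t t₁ t₂ : ℕ → ℕ}

lemma isJourneyOn_zero (a b : ℕ) (w : ℕ → V) (t : ℕ → ℕ) : IsJourneyOn G a b 0 w t where
  adj _ h := absurd h (Nat.not_lt_zero _)
  time_mem _ h := absurd h (Nat.not_lt_zero _)
  time_lt _ _ _ h := absurd h (Nat.not_lt_zero _)

lemma isJourneyOn_edge (h : (G (a + 1)).Adj x y) :
    IsJourneyOn G a (a + 1) 1 (fun i => if i = 0 then x else y) (fun _ => a + 1) where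
  adj i hi := by
    obtain rfl : i = 0 := by omega
    simpa using h
  time_mem _ _ := by simp
  time_lt _ _ _ _ := by omega

lemma IsJourneyOn.mono (h : IsJourneyOn G a b l w t) (hb : b ≤ c) : IsJourneyOn G a c l w t :=
  { h with time_mem := fun i hi => Set.Ioc_subset_Ioc_right hb (h.time_mem i hi) }

lemma IsJourneyOn.isJourney (h : IsJourneyOn G 0 b l w t) : IsJourney G b l w t :=
  ⟨h.adj, fun i hi => h.time_mem i hi, h.time_lt⟩

lemma IsJourneyOn.append (h₁ : IsJourneyOn G a b l₁ w₁ t₁) (h₂ : IsJourneyOn G b c l₂ w₂ t₂)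
    (hab : a ≤ b) (hbc : b ≤ c) (hw : w₁ l₁ = w₂ 0) :
    IsJourneyOn G a c (l₁ + l₂) (seqAppend l₁ w₁ w₂) (seqAppend l₁ t₁ t₂) where
  adj i hi := by
    rcases lt_or_ge i l₁ with hi₁ | hi₁
    · rw [seqAppend_of_le hw hi₁.le, seqAppend_of_le hw hi₁, seqAppend_of_lt hi₁]
      exact h₁.adj i hi₁
    · obtain ⟨i, rfl⟩ := Nat.exists_eq_add_of_le hi₁
      rw [seqAppend_add, add_assoc, seqAppend_add, seqAppend_add]
      exact h₂.adj i (by omega)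
  time_mem i hi := by
    rcases lt_or_ge i l₁ with hi₁ | hi₁
    · rw [seqAppend_of_lt hi₁]
      exact Set.Ioc_subset_Ioc_right hbc (h₁.time_mem i hi₁)
    · obtain ⟨i, rfl⟩ := Nat.exists_eq_add_of_le hi₁
      rw [seqAppend_add]
      exact Set.Ioc_subset_Ioc_left hab (h₂.time_mem i (by omega))
  time_lt i j hij hj := by
    rcases lt_or_ge j l₁ with hj₁ | hj₁
    · rw [seqAppend_of_lt hj₁, seqAppend_of_lt (hij.trans hj₁)]
      exact h₁.time_lt i j hij hj₁
    · obtain ⟨j, rfl⟩ := Nat.exists_eq_add_of_le hj₁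
      have hj₂ := (h₂.time_mem j (by omega)).1
      rw [seqAppend_add]
      rcases lt_or_ge i l₁ with hi₁ | hi₁
      · rw [seqAppend_of_lt hi₁]
        exact (h₁.time_mem i hi₁).2.trans_lt hj₂
      · obtain ⟨i, rfl⟩ := Nat.exists_eq_add_of_le hi₁
        rw [seqAppend_add]
        exact h₂.time_lt i j (by omega) (by omega)

lemma Reaches.refl (a b j : ℕ) (u : V) : Reaches G a b j u u :=
  ⟨0, fun _ => u, fun _ => 0, j.zero_le, rfl, rfl, isJourneyOn_zero a b _ _⟩

lemma Reaches.mono (h : Reaches G a b j u x) (hb : b ≤ c) (hj : j ≤ j') :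
    Reaches G a c j' u x := by
  obtain ⟨l, w, t, hl, hw0, hwl, hJ⟩ := h
  exact ⟨l, w, t, hl.trans hj, hw0, hwl, hJ.mono hb⟩

lemma Reaches.snoc (h : Reaches G a b j u x) (hab : a ≤ b) (hxy : (G (b + 1)).Adj x y) :
    Reaches G a (b + 1) (j + 1) u y := by
  obtain ⟨l, w, t, hl, rfl, rfl, hJ⟩ := h
  have hjoin : w l = (fun i => if i = 0 then w l else y) 0 := by simp
  refine ⟨l + 1, _, _, by omega, seqAppend_of_le hjoin l.zero_le, ?_,
    hJ.append (isJourneyOn_edge hxy) hab b.le_succ hjoin⟩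
  simp [seqAppend_add]

lemma exists_reaches_succ_of_walk (hab : a ≤ b) (p : (G (b + 1)).Walk u v) (hp : p.length ≤ k)
    (hv : ¬ Reaches G a b k u v) :
    ∃ i < p.length, Reaches G a (b + 1) (i + 1) u (p.getVert (i + 1)) ∧
      ¬ Reaches G a b (i + 1) u (p.getVert (i + 1)) := by
  by_contra! hstuck
  have hreach : ∀ i ≤ p.length, Reaches G a b i u (p.getVert i) := by
    intro i hi
    induction i with
    | zero => simpa using Reaches.refl a b 0 u
    | succ i ih => exact hstuck i hi ((ih (by omega)).snoc hab (p.adj_getVert_succ hi))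
  have hreach_v := (hreach _ le_rfl).mono le_rfl hp
  rw [p.getVert_length] at hreach_v
  exact hv hreach_v

lemma k_le_reachPotential (a b k : ℕ) (u : V) [Finite V] : k ≤ reachPotential G a b k u :=
  calc k = ∑ _j ∈ Finset.Icc 1 k, 1 := by simp
    _ ≤ reachPotential G a b k u :=
      Finset.sum_le_sum fun j _ => (Set.ncard_pos (Set.toFinite _)).2 ⟨u, Reaches.refl a b j u⟩

lemma reachPotential_le (a b k : ℕ) (u : V) [Finite V] :
    reachPotential G a b k u ≤ k * Nat.card V := by
  simpa [reachPotential] using Finset.sum_le_card_nsmul (Finset.Icc 1 k) _ _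
    fun j _ => Set.ncard_le_card {x | Reaches G a b j u x}

lemma reachPotential_lt_succ [Finite V] (hab : a ≤ b)
    (hwalk : ∃ p : (G (b + 1)).Walk u v, p.length ≤ k) (hv : ¬ Reaches G a b k u v) :
    reachPotential G a b k u < reachPotential G a (b + 1) k u := by
  obtain ⟨p, hp⟩ := hwalk
  obtain ⟨i, hi, hnew, hold⟩ := exists_reaches_succ_of_walk hab p hp hv
  have hsub : ∀ j, {x | Reaches G a b j u x} ⊆ {x | Reaches G a (b + 1) j u x} :=
    fun j x hx => Reaches.mono hx b.le_succ le_rfl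
  refine Finset.sum_lt_sum (fun j _ => Set.ncard_le_ncard (hsub j))
    ⟨i + 1, by simp; omega, Set.ncard_lt_ncard ?_⟩
  exact (Set.ssubset_iff_of_subset (hsub _)).2 ⟨_, hnew, hold⟩

theorem reaches_of_forall_walk_length_le [Finite V] (hk : 0 < k)
    (hG : ∀ t ∈ Set.Ioc a (a + k * Nat.card V), ∀ x y : V, ∃ p : (G t).Walk x y, p.length ≤ k)
    (u v : V) : Reaches G a (a + k * Nat.card V) k u v := by
  by_contra hv
  have hgrow : ∀ m ≤ k * Nat.card V, k + m ≤ reachPotential G a (a + m) k u := by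
    intro m hm
    induction m with
    | zero => simpa using k_le_reachPotential a a k u
    | succ m ih =>
      have hlt := reachPotential_lt_succ (a.le_add_right m)
        (hG (a + m + 1) ⟨by omega, by omega⟩ u v) fun h => hv (h.mono (by omega) le_rfl)
      show k + (m + 1) ≤ reachPotential G a (a + m + 1) k u
      linarith [ih (by omega)]
  linarith [hgrow _ le_rfl, reachPotential_le (G := G) a (a + k * Nat.card V) k u]

theorem exists_journey_visiting [Finite V] (hk : 0 < k) (vs : List V) (u : V) (a : ℕ)
    (hG : ∀ t ∈ Set.Ioc a (a + vs.length * (k * Nat.card V)), ∀ x y : V,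
      ∃ p : (G t).Walk x y, p.length ≤ k) :
    ∃ l w t, l ≤ k * vs.length ∧ w 0 = u ∧
      IsJourneyOn G a (a + vs.length * (k * Nat.card V)) l w t ∧ ∀ v ∈ vs, ∃ i ≤ l, w i = v := by
  induction vs generalizing u a with
  | nil => exact ⟨0, fun _ => u, fun _ => 0, le_rfl, rfl, isJourneyOn_zero _ _ _ _, by simp⟩
  | cons v vs ih =>
    have hlen : a + (v :: vs).length * (k * Nat.card V) =
        a + k * Nat.card V + vs.length * (k * Nat.card V) := by
      simp only [List.length_cons]
      ring
    rw [hlen] at hG ⊢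
    obtain ⟨l₁, w₁, t₁, hl₁, rfl, hw₁, hJ₁⟩ := reaches_of_forall_walk_length_le hk
      (fun t ht => hG t ⟨ht.1, by have := ht.2; omega⟩) u v
    obtain ⟨l₂, w₂, t₂, hl₂, hw₂, hJ₂, hvisit⟩ :=
      ih v (a + k * Nat.card V) fun t ht => hG t ⟨by have := ht.1; omega, ht.2⟩
    have hjoin : w₁ l₁ = w₂ 0 := hw₁.trans hw₂.symm
    refine ⟨l₁ + l₂, seqAppend l₁ w₁ w₂, seqAppend l₁ t₁ t₂, ?_, seqAppend_of_le hjoin l₁.zero_le,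
      hJ₁.append hJ₂ (by omega) (by omega) hjoin, ?_⟩
    · simp only [List.length_cons, Nat.mul_succ]
      omega
    · rintro x (_ | ⟨_, hx⟩)
      · exact ⟨l₁, by omega, by rw [seqAppend_of_le hjoin le_rfl, hw₁]⟩
      · obtain ⟨i, hi, rfl⟩ := hvisit x hx
        exact ⟨l₁ + i, by omega, seqAppend_add i⟩

end TemporalGraph

theorem stmt_9_general {V : Type*} [Fintype V] (G : ℕ → SimpleGraph V) (L : ℕ)
    (n : ℕ) (hn : n = Fintype.card V)
    (k : ℕ) (hk : 0 < k) (hL : k * n ^ 2 ≤ L)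
    (hconn : ∀ t, 1 ≤ t → t ≤ L → (G t).Connected)
    (hdiam : ∀ t, 1 ≤ t → t ≤ L → ∀ u v : V, (G t).dist u v ≤ k) (s : V) :
    ∃ (l : ℕ) (w : ℕ → V) (tm : ℕ → ℕ), IsJourney G L l w tm ∧ w 0 = s ∧
      l ≤ k * (n - 1) ∧ (∀ i < l, tm i ≤ k * n * (n - 1)) ∧
      ∀ v : V, ∃ i ≤ l, w i = v := by
  classical
  have hwalk : ∀ t ∈ Set.Ioc 0 L, ∀ u v : V, ∃ p : (G t).Walk u v, p.length ≤ k := by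
    intro t ⟨ht₀, htL⟩ u v
    obtain ⟨p, hp⟩ := (hconn t ht₀ htL).exists_walk_length_eq_dist u v
    exact ⟨p, hp ▸ hdiam t ht₀ htL u v⟩
  set others := (Finset.univ.erase s).toList
  have hlen : others.length = n - 1 := by simp [others, hn]
  have hT : others.length * (k * Nat.card V) = k * n * (n - 1) := by
    rw [hlen, Nat.card_eq_fintype_card, ← hn]
    ring
  have hTL : k * n * (n - 1) ≤ L :=
    le_trans (by rw [sq, ← mul_assoc]; exact Nat.mul_le_mul_left _ (n.sub_le 1)) hL
  have hwindow : ∀ t ∈ Set.Ioc 0 (0 + others.length * (k * Nat.card V)), ∀ u v : V,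
      ∃ p : (G t).Walk u v, p.length ≤ k := by
    rw [zero_add, hT]
    exact fun t ht => hwalk t (Set.Ioc_subset_Ioc_right hTL ht)
  obtain ⟨l, w, tm, hl, hw0, hJ, hvisit⟩ :=
    TemporalGraph.exists_journey_visiting hk others s 0 hwindow
  rw [zero_add, hT] at hJ
  refine ⟨l, w, tm, (hJ.mono hTL).isJourney, hw0, hlen ▸ hl, fun i hi => (hJ.time_mem i hi).2,
    fun v => ?_⟩
  by_cases hv : v = s
  · exact ⟨0, l.zero_le, hw0.trans hv.symm⟩
  · exact hvisit v (by simpa [others] using hv)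

theorem stmt_9 {V : Type*} [Fintype V] (G : ℕ → SimpleGraph V) (L : ℕ)
    (n : ℕ) (hn : n = Fintype.card V)
    (k : ℕ) (hk : 0 < k) (hkn : k < n) (hL : k * n ^ 2 ≤ L)
    (hconn : ∀ t, 1 ≤ t → t ≤ L → (G t).Connected)
    (hdiam : ∀ t, 1 ≤ t → t ≤ L → ∀ u v : V, (G t).dist u v ≤ k) (s : V) :
    ∃ (l : ℕ) (w : ℕ → V) (tm : ℕ → ℕ), IsJourney G L l w tm ∧ w 0 = s ∧
      l ≤ k * (n - 1) ∧ (∀ i < l, tm i ≤ k * n * (n - 1)) ∧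
      ∀ v : V, ∃ i ≤ l, w i = v :=
  stmt_9_general G L n hn k hk hL hconn hdiam s
end

section
/- For every integer n ≥ 3 there exists a temporal graph 𝒢 on n vertices whose underlying graph is a cycle, every snapshot of which is connected, with lifetime L ≥ 2n − 2, and a starting vertex s, such that every exploration of 𝒢 starting at s traverses at least ⌊(3/2)(n−1)⌋ edges. -/
/-- The cycle on `ZMod n`: `i` and `j` are adjacent iff they differ by `1`. -/
def cycleG (n : ℕ) : SimpleGraph (ZMod n) where
  Adj i j := i ≠ j ∧ (j = i + 1 ∨ i = j + 1)
  symm := ⟨fun i j h => ⟨h.1.symm, h.2.symm⟩⟩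
  loopless := ⟨fun i h => h.1 rfl⟩

/-!
Let `m = ⌊(n - 1) / 2⌋`. On the cycle `ZMod n`, offer every edge at time `1` and afterwards only
the path `P` obtained by deleting the edge `{m, m + 1}`. A journey from `0` could use the deleted
edge only as its first step, which starts at `0`, not an endpoint of it; so the journey is a walk
in `P`. Numbering `P` from `m + 1` (position `0`) to `m` (position `n - 1`), the walk starts at
position `n - 1 - m ≥ m` and must reach both ends: whichever it reaches first, it needs at least
`m + (n - 1) = ⌊3 (n - 1) / 2⌋` steps.
-/

open SimpleGraph

lemma abs_sub_le_of_abs_succ_sub_le_one {p : ℕ → ℤ} {l : ℕ} (hp : ∀ i < l, |p (i + 1) - p i| ≤ 1)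
    {i j : ℕ} (hij : i ≤ j) (hjl : j ≤ l) : |p j - p i| ≤ j - i := by
  induction j, hij using Nat.le_induction with
  | base => simp
  | succ j hij ih =>
    calc |p (j + 1) - p i| ≤ |p (j + 1) - p j| + |p j - p i| := abs_sub_le _ _ _
      _ ≤ 1 + (j - i) := add_le_add (hp j (by omega)) (ih (by omega))
      _ = ((j + 1 : ℕ) : ℤ) - i := by push_cast; ring

lemma add_min_le_of_abs_succ_sub_le_one {p : ℕ → ℤ} {l : ℕ}
    (hp : ∀ i < l, |p (i + 1) - p i| ≤ 1) {N : ℤ} {i₀ i₁ : ℕ} (hi₀ : i₀ ≤ l) (hi₁ : i₁ ≤ l)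
    (hp₀ : p i₀ = 0) (hp₁ : p i₁ = N) : N + min (p 0) (N - p 0) ≤ l := by
  have hdist {i j : ℕ} (hij : i ≤ j) (hjl : j ≤ l) := abs_le.mp
    (abs_sub_le_of_abs_succ_sub_le_one hp hij hjl)
  rcases le_total i₀ i₁ with h | h
  · have := hdist (Nat.zero_le i₀) hi₀
    have := hdist h hi₁
    omega
  · have := hdist (Nat.zero_le i₁) hi₁
    have := hdist h hi₀
    omega

lemma IsJourney.eq_zero_of_time_le_one {V : Type*} {G : ℕ → SimpleGraph V} {L l : ℕ}
    {w : ℕ → V} {t : ℕ → ℕ} (h : IsJourney G L l w t) {i : ℕ} (hi : i < l) (ht : t i ≤ 1) :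
    i = 0 := by
  by_contra hi0
  have := h.2.2 0 i (Nat.pos_of_ne_zero hi0) hi
  have := (h.2.1 0 (by omega)).1
  omega

section Path

variable (n : ℕ)

/-- The vertex `m + 1`, where `m = ⌊(n - 1) / 2⌋` and `{m, m + 1}` is the deleted edge. -/
def pathStart : ZMod n := ((n - 1) / 2 + 1 : ℕ)

variable [NeZero n]

def pathEquiv : ZMod n ≃ Fin n where
  toFun v := ⟨(v - pathStart n).val, ZMod.val_lt _⟩
  invFun k := pathStart n + (k : ℕ)
  left_inv v := by simp
  right_inv k := by ext; simp [ZMod.val_cast_of_lt k.2]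

/-- The cycle with the edge `{m, m + 1}` deleted: a path from `m + 1` to `m`. -/
def pathG : SimpleGraph (ZMod n) := (pathGraph n).comap (pathEquiv n)

variable {n}

lemma pathStart_add_val_pathEquiv (v : ZMod n) :
    pathStart n + ((pathEquiv n v : ℕ) : ZMod n) = v :=
  (pathEquiv n).symm_apply_apply v

lemma val_pathEquiv_pathStart_add {k : ℕ} (hk : k < n) :
    (pathEquiv n (pathStart n + k) : ℕ) = k := by
  simp [pathEquiv, ZMod.val_cast_of_lt hk]

lemma pathG_adj {u v : ZMod n} : (pathG n).Adj u v ↔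
    (pathEquiv n u : ℕ) + 1 = pathEquiv n v ∨ (pathEquiv n v : ℕ) + 1 = pathEquiv n u :=
  pathGraph_adj

lemma pathG_connected : (pathG n).Connected :=
  ⟨(Iso.comap (pathEquiv n) (pathGraph n)).preconnected_iff.mpr (pathGraph_preconnected n)⟩

lemma val_pathEquiv_natCast {a k : ℕ} (hk : k < n) (h : (n - 1) / 2 + 1 + k = a + n) :
    (pathEquiv n a : ℕ) = k := by
  have : (a : ZMod n) = pathStart n + k := by
    rw [pathStart, ← Nat.cast_add, h, Nat.cast_add, ZMod.natCast_self, add_zero]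
  rw [this, val_pathEquiv_pathStart_add hk]

lemma val_pathEquiv_pathStart : (pathEquiv n (pathStart n) : ℕ) = 0 := by
  simpa using val_pathEquiv_pathStart_add (n := n) (NeZero.pos n)

lemma val_pathEquiv_zero : (pathEquiv n 0 : ℕ) = n - 1 - (n - 1) / 2 := by
  have := NeZero.pos n
  simpa using
    val_pathEquiv_natCast (n := n) (a := 0) (k := n - 1 - (n - 1) / 2) (by omega) (by omega)

lemma val_pathEquiv_mid : (pathEquiv n ((n - 1) / 2 : ℕ) : ℕ) = n - 1 := by
  have := NeZero.pos n
  exact val_pathEquiv_natCast (by omega) (by omega)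

lemma pathG_le_cycleG : pathG n ≤ cycleG n := by
  intro u v h
  refine ⟨h.ne, ?_⟩
  rw [← pathStart_add_val_pathEquiv u, ← pathStart_add_val_pathEquiv v]
  rcases pathG_adj.mp h with h | h
  · left; rw [← h]; push_cast; ring
  · right; rw [← h]; push_cast; ring

lemma pathG_adj_of_cycleG_adj {u v : ZMod n} (h : (cycleG n).Adj u v)
    (h₀ : 0 < (pathEquiv n u : ℕ)) (h₁ : (pathEquiv n u : ℕ) + 1 < n) : (pathG n).Adj u v := by
  rw [pathG_adj]
  obtain ⟨-, rfl | hu⟩ := h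
  · left
    have : u + 1 = pathStart n + ((pathEquiv n u + 1 : ℕ) : ZMod n) := by
      push_cast; rw [← add_assoc, pathStart_add_val_pathEquiv]
    rw [this, val_pathEquiv_pathStart_add h₁]
  · right
    obtain rfl : v = u - 1 := eq_sub_of_add_eq hu.symm
    have : u - 1 = pathStart n + ((pathEquiv n u - 1 : ℕ) : ZMod n) := by
      rw [Nat.cast_sub h₀, Nat.cast_one, ← add_sub_assoc, pathStart_add_val_pathEquiv]
    rw [this, val_pathEquiv_pathStart_add (by omega)]
    omega

lemma le_length_of_pathG_walk {l : ℕ} {w : ℕ → ZMod n}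
    (hw : ∀ i < l, (pathG n).Adj (w i) (w (i + 1))) (hw₀ : w 0 = 0)
    (hcover : ∀ v, ∃ i ≤ l, w i = v) : 3 * (n - 1) / 2 ≤ l := by
  obtain ⟨i₀, hi₀, hw_i₀⟩ := hcover (pathStart n)
  obtain ⟨i₁, hi₁, hw_i₁⟩ := hcover ((n - 1) / 2 : ℕ)
  have hstep : ∀ i < l, |(pathEquiv n (w (i + 1)) : ℤ) - pathEquiv n (w i)| ≤ 1 := by
    intro i hi
    rcases pathG_adj.mp (hw i hi) with h | h <;> rw [abs_le] <;> constructor <;> omega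
  have := add_min_le_of_abs_succ_sub_le_one (p := fun i => (pathEquiv n (w i) : ℤ))
    (N := (n - 1 : ℕ)) hstep hi₀ hi₁
    (by simp only [hw_i₀, val_pathEquiv_pathStart, Nat.cast_zero])
    (by simp only [hw_i₁, val_pathEquiv_mid])
  rw [hw₀, val_pathEquiv_zero] at this
  have := NeZero.pos n
  omega

end Path

theorem stmt_11 (n : ℕ) (hn : 3 ≤ n) :
    ∃ (L : ℕ) (G : ℕ → SimpleGraph (ZMod n)) (s : ZMod n),
      2 * n - 2 ≤ L ∧
      (∀ t, G t ≤ cycleG n) ∧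
      (∀ t, 1 ≤ t → t ≤ L → (G t).Connected) ∧
      (∀ i j : ZMod n, (cycleG n).Adj i j → ∃ t, 1 ≤ t ∧ t ≤ L ∧ (G t).Adj i j) ∧
      ∀ (l : ℕ) (w : ℕ → ZMod n) (tm : ℕ → ℕ),
        IsJourney G L l w tm → w 0 = s → (∀ v : ZMod n, ∃ i ≤ l, w i = v) →
        3 * (n - 1) / 2 ≤ l := by
  have : NeZero n := ⟨by omega⟩
  refine ⟨2 * n - 2, fun t => if t = 1 then cycleG n else pathG n, 0, le_rfl, ?_, ?_, ?_, ?_⟩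
  · intro t
    beta_reduce
    split_ifs
    exacts [le_rfl, pathG_le_cycleG]
  · intro t _ _
    beta_reduce
    split_ifs
    exacts [pathG_connected.mono pathG_le_cycleG, pathG_connected]
  · exact fun i j h => ⟨1, le_rfl, by omega, by simpa using h⟩
  · intro l w tm hJ hw₀ hcover
    refine le_length_of_pathG_walk (fun i hi => ?_) hw₀ hcover
    have hadj := hJ.1 i hi
    beta_reduce at hadj
    split_ifs at hadj with ht
    · obtain rfl := hJ.eq_zero_of_time_le_one hi ht.le
      rw [hw₀] at hadj ⊢
      exact pathG_adj_of_cycleG_adj hadj (by rw [val_pathEquiv_zero]; omega)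
        (by rw [val_pathEquiv_zero]; omega)
    · exact hadj
end

section
/- For every integer n ≥ 3 there exists a temporal graph 𝒢 on n vertices whose underlying graph is a cycle, every snapshot connected, with lifetime L = 2n − 3, and a starting vertex s, such that there is exactly one exploration of 𝒢 starting at s, and this exploration traverses 2n − 3 edges. -/
/-!
Lift an exploration from `s = 0` to an integer walk `X` with `X 0 = 0`.
The walk must reach `1`; the first time its lift leaves the window `[2 - n, 0]` it does so
through the edge `{0, 1}` (leaving downwards would need `n - 2` steps and then the edge `{1, 2}`
after time `n - 2`), hence at a time `≥ n - 1`. From then on `{1, 2}` is absent, so the lift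
stays in `[2 - n, 1]` and `2` can only be visited as `X = 2 - n`. Visiting it after `1` would cost
`n - 1` further steps, too late; so `X` runs from `0` down to `2 - n` and then up to `1`, which
takes at least `(n - 2) + (n - 1) = 2n - 3` steps. Since a strict journey makes at most one step per
time unit, every inequality is tight, which pins down the walk and its times.
-/

open SimpleGraph

namespace ZMod

theorem natCast_ne_zero_of_lt {n m : ℕ} (h0 : 0 < m) (hm : m < n) : (m : ZMod n) ≠ 0 :=
  fun h => absurd (Nat.le_of_dvd h0 ((natCast_eq_zero_iff m n).1 h)) (by omega)

theorem intCast_eq_intCast_iff_of_abs_sub_lt {n : ℕ} {x y : ℤ} (h : |x - y| < n) :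
    (x : ZMod n) = y ↔ x = y := by
  refine ⟨fun hxy => ?_, congrArg _⟩
  have := Int.eq_zero_of_abs_lt_dvd ((intCast_eq_intCast_iff_dvd_sub y x n).1 hxy.symm) h
  omega

theorem exists_intCast_mem_Ico {n : ℕ} [NeZero n] (c : ℤ) (v : ZMod n) :
    ∃ x ∈ Set.Ico c (c + n), (x : ZMod n) = v := by
  refine ⟨c + (v - c).val, ⟨by omega, by have := (v - c).val_lt; omega⟩, ?_⟩
  push_cast
  rw [natCast_zmod_val]
  ring

end ZMod

theorem abs_sub_le_of_abs_sub_succ_le {X : ℕ → ℤ} {l : ℕ} (hX : ∀ i < l, |X (i + 1) - X i| ≤ 1)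
    {i j : ℕ} (hij : i ≤ j) (hj : j ≤ l) : |X j - X i| ≤ j - i := by
  induction j, hij using Nat.le_induction with
  | base => simp
  | succ j hij ih =>
    have h1 := abs_le.1 (ih (by omega))
    have h2 := abs_le.1 (hX j (by omega))
    push_cast
    exact abs_le.2 ⟨by linarith, by linarith⟩

theorem exists_intLift_of_cycleG_adj {n l : ℕ} {w : ℕ → ZMod n}
    (hw : ∀ i < l, (cycleG n).Adj (w i) (w (i + 1))) :
    ∃ X : ℕ → ℤ, X 0 = 0 ∧ (∀ i < l, |X (i + 1) - X i| = 1) ∧ ∀ i ≤ l, w i = w 0 + X i := by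
  classical
  let d : ℕ → ℤ := fun i => if w (i + 1) = w i + 1 then 1 else -1
  refine ⟨fun i => ∑ j ∈ Finset.range i, d j, by simp, fun i _ => ?_, fun i hi => ?_⟩
  · simp only [Finset.sum_range_succ, add_sub_cancel_left, d]
    split <;> simp
  · induction i with
    | zero => simp
    | succ i ih =>
      dsimp only at ih ⊢
      rw [Finset.sum_range_succ, Int.cast_add, ← add_assoc, ← ih (by omega)]
      simp only [d]
      split_ifs with h
      · simpa using h
      · have := (hw i (by omega)).2.resolve_left h
        push_cast
        linear_combination -this

namespace IsJourney

variable {V : Type*} {G : ℕ → SimpleGraph V} {L l : ℕ} {w : ℕ → V} {tm : ℕ → ℕ}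

theorem time_add_le (hJ : IsJourney G L l w tm) {i j : ℕ} (hij : i ≤ j) (hj : j < l) :
    tm i + (j - i) ≤ tm j := by
  induction j, hij using Nat.le_induction with
  | base => simp
  | succ j hij ih =>
    have := hJ.2.2 j (j + 1) (by omega) hj
    have := ih (by omega)
    omega

theorem succ_le_time (hJ : IsJourney G L l w tm) {i : ℕ} (hi : i < l) : i + 1 ≤ tm i := by
  have := hJ.time_add_le (Nat.zero_le i) hi
  have := (hJ.2.1 0 (by omega)).1
  omega

theorem length_le_s12 (hJ : IsJourney G L l w tm) : l ≤ L := by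
  rcases Nat.eq_zero_or_pos l with h | h
  · omega
  · have := hJ.succ_le_time (i := l - 1) (by omega)
    have := (hJ.2.1 (l - 1) (by omega)).2
    omega

theorem time_eq_succ (hJ : IsJourney G L l w tm) (hl : l = L) {i : ℕ} (hi : i < l) :
    tm i = i + 1 := by
  have := hJ.succ_le_time hi
  have := hJ.succ_le_time (i := l - 1) (by omega)
  have := hJ.time_add_le (i := i) (j := l - 1) (by omega) (by omega)
  have := (hJ.2.1 (l - 1) (by omega)).2
  omega

end IsJourney

theorem cycleG_deleteEdges_connected {n : ℕ} (hn : 3 ≤ n) (a : ZMod n) :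
    ((cycleG n).deleteEdges {s(a, a + 1)}).Connected := by
  have : NeZero n := ⟨by omega⟩
  set H := (cycleG n).deleteEdges {s(a, a + 1)}
  have step : ∀ k : ℕ, k + 1 < n → H.Adj (a + 1 + k) (a + 1 + k + 1) := by
    intro k hk
    refine deleteEdges_adj.2 ⟨⟨fun h => ?_, Or.inl rfl⟩, fun h => ?_⟩
    · exact ZMod.natCast_ne_zero_of_lt (n := n) (m := 1) (by omega) (by omega)
        (by push_cast; linear_combination -h)
    · rcases Sym2.eq_iff.1 h with ⟨h1, -⟩ | ⟨h1, h2⟩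
      · exact ZMod.natCast_ne_zero_of_lt (n := n) (m := k + 1) (by omega) hk
          (by push_cast; linear_combination h1)
      · obtain rfl : k = 0 := by
          by_contra hk0
          exact ZMod.natCast_ne_zero_of_lt (n := n) (m := k) (by omega) (by omega)
            (by linear_combination h1)
        exact ZMod.natCast_ne_zero_of_lt (n := n) (m := 2) (by omega) (by omega)
          (by push_cast at h2 ⊢; linear_combination h2)
  have reach : ∀ k : ℕ, k < n → H.Reachable (a + 1) (a + 1 + k) := by
    intro k
    induction k with
    | zero => simp
    | succ k ih =>
      intro hk
      push_cast
      rw [← add_assoc]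
      exact (ih (by omega)).trans (step k hk).reachable
  refine (connected_iff_exists_forall_reachable H).2 ⟨a + 1, fun v => ?_⟩
  simpa using reach (v - (a + 1)).val (ZMod.val_lt _)

-- The paper's `s`, `v₁`, `v₂` are `0`, `1`, `2`.
def absentEdge (n t : ℕ) : Sym2 (ZMod n) := if t ≤ n - 2 then s(0, 1) else s(1, 2)

def snapshot (n t : ℕ) : SimpleGraph (ZMod n) := (cycleG n).deleteEdges {absentEdge n t}

section snapshot

variable {n t : ℕ}

theorem snapshot_connected (hn : 3 ≤ n) (t : ℕ) : (snapshot n t).Connected := by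
  obtain ⟨a, ha⟩ : ∃ a : ZMod n, absentEdge n t = s(a, a + 1) := by
    unfold absentEdge
    split
    · exact ⟨0, by simp⟩
    · exact ⟨1, by norm_num⟩
  rw [snapshot, ha]
  exact cycleG_deleteEdges_connected hn a

theorem exists_snapshot_adj (hn : 3 ≤ n) {x y : ZMod n} (h : (cycleG n).Adj x y) :
    ∃ t, 1 ≤ t ∧ t ≤ 2 * n - 3 ∧ (snapshot n t).Adj x y := by
  have h02 : (0 : ZMod n) ≠ 2 :=
    (ZMod.natCast_ne_zero_of_lt (n := n) (m := 2) (by omega) (by omega)).symm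
  by_cases h01 : s(x, y) = s(0, 1)
  · refine ⟨n - 1, by omega, by omega, deleteEdges_adj.2 ⟨h, ?_⟩⟩
    rw [absentEdge, if_neg (by omega), Set.mem_singleton_iff, h01, Sym2.eq_iff]
    rintro (⟨h0, h1⟩ | ⟨h0, -⟩)
    · exact h02 (h0.trans h1)
    · exact h02 h0
  · refine ⟨1, le_rfl, by omega, deleteEdges_adj.2 ⟨h, ?_⟩⟩
    rwa [absentEdge, if_pos (by omega), Set.mem_singleton_iff]

theorem lt_of_snapshot_adj_zero_one (h : (snapshot n t).Adj 0 1) : n - 2 < t := by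
  by_contra ht
  exact (deleteEdges_adj.1 h).2 (by rw [absentEdge, if_pos (by omega)]; rfl)

theorem le_of_snapshot_adj_two_one (h : (snapshot n t).Adj 2 1) : t ≤ n - 2 := by
  by_contra ht
  exact (deleteEdges_adj.1 h).2 (by rw [absentEdge, if_neg ht, Sym2.eq_swap]; rfl)

theorem snapshot_adj_intCast (hn : 3 ≤ n) {x y : ℤ} (hx : x ∈ Set.Icc (2 - n : ℤ) 1)
    (hy : y ∈ Set.Icc (2 - n : ℤ) 1) (hxy : |y - x| = 1) (ht : t ≤ n - 2 → x ≤ 0 ∧ y ≤ 0) :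
    (snapshot n t).Adj x y := by
  have cast_eq {u : ℤ} (hu : u ∈ Set.Icc (2 - n : ℤ) 1) (v : ℤ) (hv : v ∈ Set.Icc (2 - n : ℤ) 1) :
      (u : ZMod n) = v ↔ u = v :=
    ZMod.intCast_eq_intCast_iff_of_abs_sub_lt (abs_sub_lt_iff.2 (by grind))
  have eq_one {u : ℤ} (hu : u ∈ Set.Icc (2 - n : ℤ) 1) : (u : ZMod n) = 1 ↔ u = 1 := by
    simpa using cast_eq hu 1 (by grind)
  have eq_two {u : ℤ} (hu : u ∈ Set.Icc (2 - n : ℤ) 1) : (u : ZMod n) = 2 ↔ u = 2 - n := by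
    simpa using cast_eq hu (2 - n) (by grind)
  refine deleteEdges_adj.2 ⟨⟨fun h => ?_, ?_⟩, ?_⟩
  · simp [(cast_eq hx y hy).1 h] at hxy
  · rcases (abs_eq zero_le_one).1 hxy with h | h
    · exact Or.inl (by rw [show y = x + 1 by omega]; push_cast; rfl)
    · exact Or.inr (by rw [show x = y + 1 by omega]; push_cast; rfl)
  rw [Set.mem_singleton_iff, absentEdge]
  split_ifs with h
  · rw [Sym2.eq_iff, eq_one hx, eq_one hy]
    grind
  · rw [Sym2.eq_iff, eq_one hx, eq_one hy, eq_two hx, eq_two hy]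
    grind

end snapshot

-- The unique exploration, lifted to `ℤ`: down from `0` to `2 - n ≡ 2` at times `1, …, n - 2`,
-- then up through `0` to `1` at times `n - 1, …, 2n - 3`.
def canonicalLift (n i : ℕ) : ℤ := if i ≤ n - 2 then -i else i + 4 - 2 * n

section canonical

variable {n : ℕ}

theorem canonicalLift_mem_Icc (hn : 3 ≤ n) {i : ℕ} (hi : i ≤ 2 * n - 3) :
    canonicalLift n i ∈ Set.Icc (2 - n : ℤ) 1 := by
  unfold canonicalLift
  split_ifs <;> constructor <;> omega

theorem canonicalLift_isJourney (hn : 3 ≤ n) :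
    IsJourney (snapshot n) (2 * n - 3) (2 * n - 3) (fun i => (canonicalLift n i : ZMod n))
      (· + 1) := by
  refine ⟨fun i hi => snapshot_adj_intCast hn (canonicalLift_mem_Icc hn hi.le)
      (canonicalLift_mem_Icc hn hi) ?_ fun ht => ?_,
    fun i hi => ⟨i.succ_pos, by dsimp only; omega⟩, fun i j hij _ => Nat.succ_lt_succ hij⟩
  · unfold canonicalLift
    split_ifs <;> rw [abs_eq zero_le_one] <;> omega
  · unfold canonicalLift
    split_ifs <;> omega

theorem exists_canonicalLift_eq (hn : 3 ≤ n) (v : ZMod n) :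
    ∃ i ≤ 2 * n - 3, (canonicalLift n i : ZMod n) = v := by
  have : NeZero n := ⟨by omega⟩
  obtain ⟨x, hx, rfl⟩ := ZMod.exists_intCast_mem_Ico (2 - n) v
  rw [Set.mem_Ico] at hx
  rcases le_or_gt x 0 with h | h
  · refine ⟨x.natAbs, by omega, ?_⟩
    rw [canonicalLift, if_pos (by omega)]
    congr 1
    omega
  · refine ⟨2 * n - 3, le_rfl, ?_⟩
    rw [canonicalLift, if_neg (by omega)]
    congr 1
    omega

end canonical

section exploration

variable {n L l : ℕ} {w : ℕ → ZMod n} {tm : ℕ → ℕ} {X : ℕ → ℤ}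

theorem lt_time_of_lift_step_zero_one (hJ : IsJourney (snapshot n) L l w tm)
    (hXw : ∀ i ≤ l, w i = X i) {i : ℕ} (hi : i < l) (h0 : X i = 0) (h1 : X (i + 1) = 1) :
    n - 2 < tm i :=
  lt_of_snapshot_adj_zero_one (by simpa [hXw i hi.le, hXw (i + 1) hi, h0, h1] using hJ.1 i hi)

theorem time_le_of_lift_step_one_two (hJ : IsJourney (snapshot n) L l w tm)
    (hXw : ∀ i ≤ l, w i = X i) {i : ℕ} (hi : i < l)
    (h : (X i = 1 ∧ X (i + 1) = 2) ∨ (X i = 2 - n ∧ X (i + 1) = 1 - n)) : tm i ≤ n - 2 := by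
  have hadj := hJ.1 i hi
  rw [hXw i hi.le, hXw (i + 1) hi] at hadj
  rcases h with ⟨h1, h2⟩ | ⟨h2, h1⟩ <;> simp only [h1, h2] at hadj <;> push_cast at hadj
  · exact le_of_snapshot_adj_two_one hadj.symm
  · simpa using le_of_snapshot_adj_two_one (by simpa using hadj)

theorem exists_lift_eq_one (hn : 3 ≤ n) (hJ : IsJourney (snapshot n) L l w tm)
    (hX : ∀ i < l, |X (i + 1) - X i| = 1) (hX0 : X 0 = 0) (hXw : ∀ i ≤ l, w i = X i)
    (h1 : ∃ i ≤ l, w i = 1) :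
    ∃ a, 0 < a ∧ a ≤ l ∧ X a = 1 ∧ n - 2 < tm (a - 1) ∧
      ∀ i < a, X i ∈ Set.Icc (2 - n : ℤ) 0 := by
  classical
  have hex : ∃ a, a ≤ l ∧ X a ∉ Set.Icc (2 - n : ℤ) 0 := by
    obtain ⟨j, hj, hwj⟩ := h1
    refine ⟨j, hj, fun hmem => ?_⟩
    rw [Set.mem_Icc] at hmem
    have : (X j : ZMod n) = ((1 : ℤ) : ZMod n) := by rw [← hXw j hj, hwj, Int.cast_one]
    rw [ZMod.intCast_eq_intCast_iff_of_abs_sub_lt (abs_sub_lt_iff.2 (by omega))] at this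
    omega
  obtain ⟨hal, haX⟩ := Nat.find_spec hex
  have hpre : ∀ i < Nat.find hex, X i ∈ Set.Icc (2 - n : ℤ) 0 := fun i hi => by
    by_contra h
    exact Nat.find_min hex hi ⟨by omega, h⟩
  set a := Nat.find hex
  have ha : 0 < a := Nat.pos_of_ne_zero fun h => haX (by simp [h, hX0]; omega)
  have hstep := hX (a - 1) (by omega)
  have hprev := hpre (a - 1) (by omega)
  rw [Nat.sub_add_cancel ha] at hstep
  rw [Set.mem_Icc] at haX hprev
  rcases (abs_eq zero_le_one).1 hstep with h | h
  · refine ⟨a, ha, hal, by omega, lt_time_of_lift_step_zero_one hJ hXw (by omega) (by omega)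
      (by rw [Nat.sub_add_cancel ha]; omega), hpre⟩
  · have hdist := abs_le.1 <| abs_sub_le_of_abs_sub_succ_le (fun i hi => (hX i hi).le)
      (Nat.zero_le (a - 1)) (by omega)
    have := hJ.succ_le_time (i := a - 1) (by omega)
    have := time_le_of_lift_step_one_two hJ hXw (i := a - 1) (by omega)
      (Or.inr ⟨by omega, by rw [Nat.sub_add_cancel ha]; omega⟩)
    omega

theorem lift_mem_Icc (hJ : IsJourney (snapshot n) L l w tm)
    (hX : ∀ i < l, |X (i + 1) - X i| = 1) (hXw : ∀ i ≤ l, w i = X i) {a : ℕ} (ha : 0 < a)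
    (htime : n - 2 < tm (a - 1)) (hpre : ∀ i < a, X i ∈ Set.Icc (2 - n : ℤ) 0) :
    ∀ i ≤ l, X i ∈ Set.Icc (2 - n : ℤ) 1 := by
  intro i hi
  induction i with
  | zero => exact Set.Icc_subset_Icc_right zero_le_one (hpre 0 ha)
  | succ i ih =>
    rcases lt_or_ge (i + 1) a with h | h
    · exact Set.Icc_subset_Icc_right zero_le_one (hpre _ h)
    have hti : n - 2 < tm i := by
      have := hJ.time_add_le (i := a - 1) (j := i) (by omega) (by omega)
      omega
    have hXi := ih (by omega)
    have hstep := (abs_eq zero_le_one).1 (hX i hi)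
    rw [Set.mem_Icc] at hXi ⊢
    by_contra hout
    have := time_le_of_lift_step_one_two hJ hXw hi (by omega)
    omega

theorem lift_eq_canonicalLift (hn : 3 ≤ n) (hJ : IsJourney (snapshot n) (2 * n - 3) l w tm)
    (hX : ∀ i < l, |X (i + 1) - X i| = 1) (hX0 : X 0 = 0) (hXw : ∀ i ≤ l, w i = X i)
    (hcov : ∀ v : ZMod n, ∃ i ≤ l, w i = v) :
    l = 2 * n - 3 ∧ ∀ i ≤ l, X i = canonicalLift n i := by
  obtain ⟨a, ha, hal, hXa, htime, hpre⟩ := exists_lift_eq_one hn hJ hX hX0 hXw (hcov 1)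
  have hband := lift_mem_Icc hJ hX hXw ha htime hpre
  have hdist {i j : ℕ} (hij : i ≤ j) (hj : j ≤ l) :=
    abs_le.1 (abs_sub_le_of_abs_sub_succ_le (fun k hk => (hX k hk).le) hij hj)
  obtain ⟨b, hbl, hXb⟩ : ∃ b ≤ l, X b = 2 - n := by
    obtain ⟨b, hbl, hwb⟩ := hcov 2
    have := hband b hbl
    rw [Set.mem_Icc] at this
    refine ⟨b, hbl, (ZMod.intCast_eq_intCast_iff_of_abs_sub_lt (n := n) ?_).1 ?_⟩
    · exact abs_sub_lt_iff.2 ⟨by omega, by omega⟩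
    · rw [← hXw b hbl, hwb]
      simp
  -- Reaching `2 - n` after `1` would take `n - 1` more steps, all later than time `n - 2`.
  have hba : b < a := by
    by_contra hab
    have := hdist (i := a) (j := b) (by omega) hbl
    have := hJ.time_add_le (i := a - 1) (j := b - 1) (by omega) (by omega)
    have := (hJ.2.1 (b - 1) (by omega)).2
    omega
  have hb := hdist (Nat.zero_le b) hbl
  have hab := hdist hba.le hal
  have hl := hJ.length_le_s12
  refine ⟨by omega, fun i hi => ?_⟩
  unfold canonicalLift
  split_ifs with h
  · have := hdist (Nat.zero_le i) hi
    have := hdist (i := i) (j := b) (by omega) hbl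
    omega
  · have := hdist (i := b) (j := i) (by omega) hi
    have := hdist (i := i) (j := a) (by omega) hal
    omega

theorem exploration_eq_canonical (hn : 3 ≤ n) (hJ : IsJourney (snapshot n) (2 * n - 3) l w tm)
    (h0 : w 0 = 0) (hcov : ∀ v : ZMod n, ∃ i ≤ l, w i = v) :
    l = 2 * n - 3 ∧ (∀ i ≤ l, w i = canonicalLift n i) ∧ ∀ i < l, tm i = i + 1 := by
  obtain ⟨X, hX0, hX, hXw⟩ :=
    exists_intLift_of_cycleG_adj fun i hi => deleteEdges_le _ (hJ.1 i hi)
  simp only [h0, zero_add] at hXw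
  obtain ⟨hl, hXc⟩ := lift_eq_canonicalLift hn hJ hX hX0 hXw hcov
  exact ⟨hl, fun i hi => by rw [hXw i hi, hXc i hi], fun i hi => hJ.time_eq_succ hl hi⟩

end exploration

theorem stmt_12 (n : ℕ) (hn : 3 ≤ n) :
    ∃ (G : ℕ → SimpleGraph (ZMod n)) (s : ZMod n),
      (∀ t, G t ≤ cycleG n) ∧
      (∀ t, 1 ≤ t → t ≤ 2 * n - 3 → (G t).Connected) ∧
      (∀ i j : ZMod n, (cycleG n).Adj i j → ∃ t, 1 ≤ t ∧ t ≤ 2 * n - 3 ∧ (G t).Adj i j) ∧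
      (∃ (l : ℕ) (w : ℕ → ZMod n) (tm : ℕ → ℕ), IsJourney G (2 * n - 3) l w tm ∧
        w 0 = s ∧ (∀ v : ZMod n, ∃ i ≤ l, w i = v)) ∧
      (∀ (l : ℕ) (w : ℕ → ZMod n) (tm : ℕ → ℕ), IsJourney G (2 * n - 3) l w tm →
        w 0 = s → (∀ v : ZMod n, ∃ i ≤ l, w i = v) → l = 2 * n - 3) ∧
      (∀ (l₁ : ℕ) (w₁ : ℕ → ZMod n) (tm₁ : ℕ → ℕ) (l₂ : ℕ) (w₂ : ℕ → ZMod n) (tm₂ : ℕ → ℕ),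
        IsJourney G (2 * n - 3) l₁ w₁ tm₁ → w₁ 0 = s → (∀ v : ZMod n, ∃ i ≤ l₁, w₁ i = v) →
        IsJourney G (2 * n - 3) l₂ w₂ tm₂ → w₂ 0 = s → (∀ v : ZMod n, ∃ i ≤ l₂, w₂ i = v) →
        l₁ = l₂ ∧ (∀ i ≤ l₁, w₁ i = w₂ i) ∧ (∀ i < l₁, tm₁ i = tm₂ i)) := by
  refine ⟨snapshot n, 0, fun t => deleteEdges_le _, fun t _ _ => snapshot_connected hn t,
    fun i j => exists_snapshot_adj hn,
    ⟨2 * n - 3, _, _, canonicalLift_isJourney hn, by simp [canonicalLift],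
      exists_canonicalLift_eq hn⟩,
    fun l w tm hJ h0 hcov => (exploration_eq_canonical hn hJ h0 hcov).1, ?_⟩
  intro l₁ w₁ tm₁ l₂ w₂ tm₂ hJ₁ h₁ hcov₁ hJ₂ h₂ hcov₂
  obtain ⟨hl₁, hw₁, htm₁⟩ := exploration_eq_canonical hn hJ₁ h₁ hcov₁
  obtain ⟨hl₂, hw₂, htm₂⟩ := exploration_eq_canonical hn hJ₂ h₂ hcov₂
  have hl : l₁ = l₂ := hl₁.trans hl₂.symm
  exact ⟨hl, fun i hi => (hw₁ i hi).trans (hw₂ i (hl ▸ hi)).symm,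
    fun i hi => (htm₁ i hi).trans (htm₂ i (hl ▸ hi)).symm⟩
end

section
/- Let 𝒢 be a temporal graph whose underlying graph is a cycle on n vertices, with every snapshot connected and lifetime L ≥ n − 1. Then for every time step t with t ≤ L − n + 2 there exists a vertex s_h(t) such that an agent starting at s_h(t) at time t and moving one edge clockwise at each of the following n − 1 time steps never encounters a missing edge, and hence visits all n vertices in exactly n − 1 time steps; symmetrically there exists such a vertex s_a(t) for the counter-clockwise direction. -/
/-!
A connected spanning subgraph of the cycle misses at most one cycle edge: if both
`{a, a + 1}` and `{b, b + 1}` were missing with `a ≠ b`, the clockwise arc `a + 1, …, b`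
would be a union of components containing `a + 1` but not `a`. Hence at each of the
`n - 1` time steps at most one clockwise starting vertex is blocked, and since there are
`n` vertices some start is blocked at none of them; likewise counter-clockwise.
-/

theorem ZMod.val_sub_one_of_ne_zero {n : ℕ} [NeZero n] {x : ZMod n} (hx : x ≠ 0) :
    (x - 1).val = x.val - 1 := by
  rcases eq_or_ne n 1 with rfl | hn
  · exact absurd (Subsingleton.elim x 0) hx
  · rw [ZMod.val_sub, ZMod.val_one'' hn]
    rwa [ZMod.val_one'' hn, Nat.one_le_iff_ne_zero, ZMod.val_ne_zero]

theorem SimpleGraph.Reachable.iff_of_forall_adj {V : Type*} {G : SimpleGraph V} {P : V → Prop}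
    (hP : ∀ u v, G.Adj u v → (P u ↔ P v)) {u v : V} (h : G.Reachable u v) : P u ↔ P v := by
  obtain ⟨w⟩ := h
  induction w with
  | nil => rfl
  | cons hadj _ ih => exact (hP _ _ hadj).trans ih

theorem exists_forall_notMem_of_subsingleton {α : Type*} [Fintype α] {m : ℕ}
    (hm : m < Fintype.card α) {B : ℕ → Set α} (hB : ∀ j < m, (B j).Subsingleton) :
    ∃ s, ∀ j < m, s ∉ B j := by
  by_contra! hcover
  choose g hgm hg using hcover
  have hinj : Function.Injective fun s => (⟨g s, hgm s⟩ : Fin m) := by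
    intro s s' hss'
    have hgg : g s = g s' := Fin.mk.inj_iff.mp hss'
    exact hB _ (hgm s) (hg s) (hgg ▸ hg s')
  have := Fintype.card_le_of_injective _ hinj
  rw [Fintype.card_fin] at this
  omega

theorem subsingleton_setOf_not_adj_add_one {n : ℕ} [NeZero n] {H : SimpleGraph (ZMod n)}
    (hsub : H ≤ cycleG n) (hconn : H.Connected) : {a | ¬H.Adj a (a + 1)}.Subsingleton := by
  intro a ha b hb
  by_contra hab
  -- `P` is membership in the clockwise arc `a + 1, …, b`
  let P : ZMod n → Prop := fun x => (b - x).val < (b - a).val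
  have hba : b - a ≠ 0 := sub_ne_zero.mpr (Ne.symm hab)
  have hstep : ∀ u, H.Adj u (u + 1) → (P u ↔ P (u + 1)) := by
    intro u hu
    have hua : u ≠ a := by rintro rfl; exact ha hu
    have hub : u ≠ b := by rintro rfl; exact hb hu
    have hval : (b - u).val ≠ (b - a).val := fun h =>
      hua (sub_right_injective (ZMod.val_injective n h))
    have hbu : b - u ≠ 0 := sub_ne_zero.mpr (Ne.symm hub)
    have := (ZMod.val_ne_zero _).mpr hbu
    simp only [P, sub_add_eq_sub_sub, ZMod.val_sub_one_of_ne_zero hbu]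
    omega
  have hinv : ∀ u v, H.Adj u v → (P u ↔ P v) := by
    intro u v huv
    rcases (hsub huv).2 with rfl | rfl
    · exact hstep u huv
    · exact (hstep v huv.symm).symm
  have hPa : ¬P a := lt_irrefl _
  have hPa1 : P (a + 1) := by
    have := (ZMod.val_ne_zero _).mpr hba
    simp only [P, sub_add_eq_sub_sub, ZMod.val_sub_one_of_ne_zero hba]
    omega
  exact hPa (((hconn.preconnected a (a + 1)).iff_of_forall_adj hinv).mpr hPa1)

theorem stmt_17_general (n : ℕ) (hn : 3 ≤ n) (G : ℕ → SimpleGraph (ZMod n)) (L : ℕ)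
    (hsub : ∀ t, G t ≤ cycleG n)
    (hconn : ∀ t, 1 ≤ t → t ≤ L → (G t).Connected)
    (t : ℕ) (ht1 : 1 ≤ t) (ht : t + n ≤ L + 2) :
    (∃ sh : ZMod n, ∀ j < n - 1, (G (t + j)).Adj (sh + (j : ZMod n)) (sh + (j : ZMod n) + 1)) ∧
    (∃ sa : ZMod n, ∀ j < n - 1, (G (t + j)).Adj (sa - (j : ZMod n)) (sa - (j : ZMod n) - 1)) := by
  have : NeZero n := ⟨by omega⟩
  have hcard : n - 1 < Fintype.card (ZMod n) := by rw [ZMod.card]; omega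
  have hblocked : ∀ j < n - 1, {a | ¬(G (t + j)).Adj a (a + 1)}.Subsingleton := fun j hj =>
    subsingleton_setOf_not_adj_add_one (hsub _) (hconn _ (by omega) (by omega))
  constructor
  · obtain ⟨s, hs⟩ := exists_forall_notMem_of_subsingleton hcard fun j hj =>
      (hblocked j hj).preimage (add_left_injective (j : ZMod n))
    exact ⟨s, fun j hj => not_not.mp (hs j hj)⟩
  · obtain ⟨s, hs⟩ := exists_forall_notMem_of_subsingleton hcard fun j hj =>
      (hblocked j hj).preimage (sub_left_injective (b := (j + 1 : ZMod n)))
    refine ⟨s, fun j hj => ?_⟩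
    simpa only [sub_add_eq_sub_sub, sub_add_cancel] using (not_not.mp (hs j hj)).symm

theorem stmt_17 (n : ℕ) (hn : 3 ≤ n) (G : ℕ → SimpleGraph (ZMod n)) (L : ℕ)
    (hL : n - 1 ≤ L)
    (hsub : ∀ t, G t ≤ cycleG n)
    (hconn : ∀ t, 1 ≤ t → t ≤ L → (G t).Connected)
    (hunder : ∀ i j : ZMod n, (cycleG n).Adj i j → ∃ t, 1 ≤ t ∧ t ≤ L ∧ (G t).Adj i j)
    (t : ℕ) (ht1 : 1 ≤ t) (ht : t + n ≤ L + 2) :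
    (∃ sh : ZMod n, ∀ j < n - 1, (G (t + j)).Adj (sh + (j : ZMod n)) (sh + (j : ZMod n) + 1)) ∧
    (∃ sa : ZMod n, ∀ j < n - 1, (G (t + j)).Adj (sa - (j : ZMod n)) (sa - (j : ZMod n) - 1)) :=
  stmt_17_general n hn G L hsub hconn t ht1 ht
end
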